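/- Let A = aaᵀ + λ'(1 − 1/r)e₁e₁ᵀ with a = (1/√r, 1, …, 1)ᵀ ∈ ℝ^M, M ≥ 2, r > 1, λ' > 0. Every nonzero eigenvalue q of A satisfies r q² − ((M−1)r + (r−1)λ' + 1) q + λ'(M−1)(r−1) = 0, and each corresponding eigenvector has the form (x, y, …, y)ᵀ with x/√r + (M−1)y = q y and x/r + (M−1)y/√r + λ'(1 − 1/r)x = q x. -/

import Mathlib

/-!
Write `A = aaᵀ + c e₁e₁ᵀ`. For `i ≥ 2` the `i`-th row of `Au = qu` reads `a ⬝ᵥ u = q uᵢ`, so all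
coordinates of `u` but the first equal `y := (a ⬝ᵥ u) / q`, and the first two rows become the two
linear equations in `(x, y)`. As `u ≠ 0` forces `y ≠ 0`, eliminating `x = √r (q - (M - 1)) y`
from the second equation leaves the quadratic in `q`.
-/

open Matrix

section RankOnePlusCorner

variable {ι : Type*} [Fintype ι] [DecidableEq ι]

theorem vecMulVec_self_add_smul_single_mulVec_apply (a u : ι → ℝ) (c : ℝ) (i₀ i : ι) :
    ((vecMulVec a a + c • single i₀ i₀ 1) *ᵥ u) i =
      a i * (a ⬝ᵥ u) + if i = i₀ then c * u i₀ else 0 := by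
  rw [add_mulVec, smul_mulVec, vecMulVec_mulVec, single_mulVec]
  rcases eq_or_ne i i₀ with rfl | hi
  · simp [mul_comm]
  · simp [hi, mul_comm]

theorem dotProduct_eq_add_card_mul_of_eq_off {a u : ι → ℝ} {i₀ : ι} {y : ℝ}
    (h : ∀ i ≠ i₀, a i * u i = y) :
    a ⬝ᵥ u = a i₀ * u i₀ + (Fintype.card ι - 1 : ℝ) * y := by
  rw [dotProduct, Fintype.sum_eq_add_sum_compl i₀, Finset.sum_congr rfl fun i hi ↦
    h i (by simpa using hi)]
  simp [Finset.card_compl, Nat.cast_sub (Fintype.card_pos_iff.mpr ⟨i₀⟩)]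

theorem exists_eigenvector_eq_off_of_vecMulVec_self_add_smul_single {a u : ι → ℝ} {c q : ℝ}
    {i₀ : ι} (hq : q ≠ 0) (ha : ∀ i ≠ i₀, a i = 1)
    (h : (vecMulVec a a + c • single i₀ i₀ 1) *ᵥ u = q • u) :
    ∃ y, (∀ i ≠ i₀, u i = y) ∧ a i₀ * u i₀ + (Fintype.card ι - 1 : ℝ) * y = q * y ∧
      a i₀ * (a i₀ * u i₀ + (Fintype.card ι - 1 : ℝ) * y) + c * u i₀ = q * u i₀ := by
  have hrow (i : ι) : a i * (a ⬝ᵥ u) + (if i = i₀ then c * u i₀ else 0) = q * u i := by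
    rw [← vecMulVec_self_add_smul_single_mulVec_apply, h, Pi.smul_apply, smul_eq_mul]
  set y := (a ⬝ᵥ u) / q
  have hoff (i : ι) (hi : i ≠ i₀) : u i = y := by
    have := hrow i
    rw [if_neg hi, ha i hi] at this
    rw [eq_div_iff hq]
    linarith
  have hdot : a ⬝ᵥ u = a i₀ * u i₀ + (Fintype.card ι - 1 : ℝ) * y :=
    dotProduct_eq_add_card_mul_of_eq_off fun i hi ↦ by rw [ha i hi, hoff i hi, one_mul]
  refine ⟨y, hoff, ?_, ?_⟩
  · rw [← hdot, mul_div_cancel₀ _ hq]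
  · rw [← hdot, ← hrow i₀, if_pos rfl]

end RankOnePlusCorner

theorem quadratic_eq_zero_of_eigen_equations {r t lam q x y m : ℝ} (ht : t ^ 2 = r) (ht0 : t ≠ 0)
    (hy : y ≠ 0) (h₁ : x / t + m * y = q * y)
    (h₂ : x / r + m * y / t + lam * (1 - 1 / r) * x = q * x) :
    r * q ^ 2 - (m * r + (r - 1) * lam + 1) * q + lam * m * (r - 1) = 0 := by
  have hx : x = t * (q - m) * y := by field_simp at h₁; linarith
  subst hx ht
  field_simp at h₂
  linear_combination -h₂

/-- Any nonzero eigenvalue `q` of `A = aaᵀ + λ'(1 − 1/r)e₁e₁ᵀ`, `a = (1/√r,1,…,1)ᵀ`,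
satisfies `rq² − ((M−1)r + (r−1)λ' + 1)q + λ'(M−1)(r−1) = 0`, and each corresponding
eigenvector has the form `(x, y, …, y)ᵀ` with
`x/√r + (M−1)y = qy` and `x/r + (M−1)y/√r + λ'(1 − 1/r)x = qx`. -/
theorem stmt19 (M : ℕ) (hM : 2 ≤ M) (r lam : ℝ) (hr : 1 < r)
    (u : Fin M → ℝ) (q : ℝ) (hq : q ≠ 0) (hu : u ≠ 0)
    (heig :
      (vecMulVec (fun i : Fin M => if (i : ℕ) = 0 then (Real.sqrt r)⁻¹ else 1)
          (fun i : Fin M => if (i : ℕ) = 0 then (Real.sqrt r)⁻¹ else 1) +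
        (lam * (1 - 1 / r)) •
          Matrix.of fun i j : Fin M =>
            if (i : ℕ) = 0 ∧ (j : ℕ) = 0 then (1 : ℝ) else 0).mulVec u = q • u) :
    (r * q ^ 2 - (((M : ℝ) - 1) * r + (r - 1) * lam + 1) * q +
        lam * ((M : ℝ) - 1) * (r - 1) = 0) ∧
    ∃ x y : ℝ, u ⟨0, by omega⟩ = x ∧ (∀ i : Fin M, (i : ℕ) ≠ 0 → u i = y) ∧
      x / Real.sqrt r + ((M : ℝ) - 1) * y = q * y ∧
      x / r + ((M : ℝ) - 1) * y / Real.sqrt r + lam * (1 - 1 / r) * x = q * x := by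
  set t := Real.sqrt r
  have ht : t ^ 2 = r := Real.sq_sqrt (by linarith)
  have ht0 : t ≠ 0 := (Real.sqrt_pos.mpr (by linarith)).ne'
  set z : Fin M := ⟨0, by omega⟩
  have hz (i : Fin M) : (i : ℕ) = 0 ↔ i = z := by simp [z, Fin.ext_iff]
  have hcorner : (of fun i j : Fin M => if (i : ℕ) = 0 ∧ (j : ℕ) = 0 then (1 : ℝ) else 0) =
      single z z 1 := by
    ext i j
    simp [single, hz, eq_comm]
  rw [hcorner] at heig
  obtain ⟨y, hoff, h₁, h₂⟩ :=
    exists_eigenvector_eq_off_of_vecMulVec_self_add_smul_single hq (fun i hi ↦ if_neg (mt (hz i).1 hi)) heig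
  simp only [hz, if_true, Fintype.card_fin] at h₁ h₂
  have h₁' : u z / t + (M - 1 : ℝ) * y = q * y := by rwa [div_eq_inv_mul]
  have h₂' : u z / r + (M - 1 : ℝ) * y / t + lam * (1 - 1 / r) * u z = q * u z := by
    rw [← h₂, ← ht]
    ring
  have hy : y ≠ 0 := by
    rintro rfl
    have hx : u z = 0 := by simpa [ht0] using h₁
    exact hu (funext fun i ↦ by by_cases hi : i = z <;> simp [hi, hx, hoff])
  exact ⟨quadratic_eq_zero_of_eigen_equations ht ht0 hy h₁' h₂', u z, y, rfl,
    fun i hi ↦ hoff i (mt (hz i).2 hi), h₁', h₂'⟩
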